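/- Associativity of parallel composition: for all DL-PA∥ programs π₁, π₂, π₃ and all models M, M': M⟦π₁ ∥ (π₂ ∥ π₃)⟧M' if and only if M⟦(π₁ ∥ π₂) ∥ π₃⟧M'. -/

import Mathlib

set_option maxHeartbeats 1000000

/-- Propositional variables. -/
abbrev PVar := ℕ

/-- A DL-PA∥ model: readable variables `R`, writable variables `W`,
valuation `V`, with writability implying readability. -/
@[ext]
structure Model where
  R : Set PVar
  W : Set PVar
  V : Set PVar
  sub : W ⊆ R

mutual
/-- Formulas of DL-PA∥. -/
inductive Formula : Type where
  | atom : PVar → Formula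
  | top  : Formula
  | neg  : Formula → Formula
  | or   : Formula → Formula → Formula
  | dia  : Program → Formula → Formula
/-- Programs of DL-PA∥. -/
inductive Program : Type where
  | assignT : PVar → Program   -- +p
  | assignF : PVar → Program   -- −p
  | addR : PVar → Program      -- +r p
  | remR : PVar → Program      -- −r p
  | addW : PVar → Program      -- +w p
  | remW : PVar → Program      -- −w p
  | testEx : Formula → Program -- exogenous test φ?
  | testEn : Formula → Program -- endogenous test φ?ⁿ
  | seq : Program → Program → Program
  | choice : Program → Program → Program
  | star : Program → Program
  | par : Program → Program → Program
end

/-- RW-disjointness. -/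
def RWdisjoint (M1 M2 : Model) : Prop :=
  M1.W ∩ M2.R = ∅ ∧ M2.W ∩ M1.R = ∅

/-- Split relation `M ◁ (M₁,M₂)`. -/
def SplitRel (M M1 M2 : Model) : Prop :=
  RWdisjoint M1 M2 ∧ M.R = M1.R ∪ M2.R ∧ M.W = M1.W ∪ M2.W ∧ M.V = M1.V ∧ M.V = M2.V

/-- Merge relation `M ▷ (M₁,M₂)`. -/
def MergeRel (M M1 M2 : Model) : Prop :=
  RWdisjoint M1 M2 ∧ M.R = M1.R ∪ M2.R ∧ M.W = M1.W ∪ M2.W ∧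
  M1.V \ M.W = M2.V \ M.W ∧ M.V = (M1.V ∩ M1.W) ∪ (M2.V ∩ M2.W) ∪ (M1.V ∩ M2.V)

/-- Indistinguishability `M ∼ M'`. -/
def Indist (M M' : Model) : Prop :=
  M.R = M'.R ∧ M.W = M'.W ∧ M.V ∩ M.R = M'.V ∩ M'.R

mutual
/-- Truth of a formula in a model. -/
def Sat : Model → Formula → Prop
  | M, .atom p => p ∈ M.V
  | _, .top => True
  | M, .neg φ => ¬ Sat M φ
  | M, .or φ ψ => Sat M φ ∨ Sat M ψ
  | M, .dia π φ => ∃ M', Interp π M M' ∧ Sat M' φ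
/-- Interpretation of programs as relations between models. -/
def Interp : Program → Model → Model → Prop
  | .assignT p, M, M' => M'.R = M.R ∧ M'.W = M.W ∧ M'.V = M.V ∪ {p} ∧ p ∈ M.W
  | .assignF p, M, M' => M'.R = M.R ∧ M'.W = M.W ∧ M'.V = M.V \ {p} ∧ p ∈ M.W
  | .addR p, M, M' => M'.R = M.R ∪ {p} ∧ M'.W = M.W ∧ M'.V = M.V
  | .remR p, M, M' => M'.R = M.R \ {p} ∧ M'.W = M.W \ {p} ∧ M'.V = M.V
  | .addW p, M, M' => M'.R = M.R ∪ {p} ∧ M'.W = M.W ∪ {p} ∧ M'.V = M.V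
  | .remW p, M, M' => M'.R = M.R ∧ M'.W = M.W \ {p} ∧ M'.V = M.V
  | .testEx φ, M, M' => M = M' ∧ Sat M φ
  | .testEn φ, M, M' => M = M' ∧ ∀ M'', Indist M'' M → Sat M'' φ
  | .seq π1 π2, M, M' => ∃ M'', Interp π1 M M'' ∧ Interp π2 M'' M'
  | .choice π1 π2, M, M' => Interp π1 M M' ∨ Interp π2 M M'
  | .star π, M, M' => Relation.ReflTransGen (fun A B => Interp π A B) M M'
  | .par π1 π2, M, M' => ∃ M1 M2 M1' M2',
      SplitRel M M1 M2 ∧ MergeRel M' M1' M2' ∧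
      Interp π1 M1 M1' ∧ Interp π2 M2 M2' ∧
      M1.R = M1'.R ∧ M1.W = M1'.W ∧ M1.V \ M1.W = M1'.V \ M1'.W ∧
      M2.R = M2'.R ∧ M2.W = M2'.W ∧ M2.V \ M2.W = M2'.V \ M2'.W
end

mutual
/-- Propositional variables occurring in a formula. -/
def varsF : Formula → Finset PVar
  | .atom p => {p}
  | .top => ∅
  | .neg φ => varsF φ
  | .or φ ψ => varsF φ ∪ varsF ψ
  | .dia π φ => varsP π ∪ varsF φ
/-- Propositional variables occurring in a program. -/
def varsP : Program → Finset PVar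
  | .assignT p => {p}
  | .assignF p => {p}
  | .addR p => {p}
  | .remR p => {p}
  | .addW p => {p}
  | .remW p => {p}
  | .testEx φ => varsF φ
  | .testEn φ => varsF φ
  | .seq π1 π2 => varsP π1 ∪ varsP π2
  | .choice π1 π2 => varsP π1 ∪ varsP π2
  | .star π => varsP π
  | .par π1 π2 => varsP π1 ∪ varsP π2
end

/-- `⊥`. -/
def botF : Formula := .neg .top
/-- Conjunction. -/
def andF (φ ψ : Formula) : Formula := .neg (.or (.neg φ) (.neg ψ))
/-- Implication. -/
def impF (φ ψ : Formula) : Formula := .or (.neg φ) ψ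
/-- Bi-implication. -/
def iffF (φ ψ : Formula) : Formula := andF (impF φ ψ) (impF ψ φ)
/-- `[π]φ`. -/
def boxF (π : Program) (φ : Formula) : Formula := .neg (.dia π (.neg φ))
/-- `w(p)`: `p` is writable. -/
def wF (p : PVar) : Formula := .dia (.assignT p) .top
/-- `r(p)`: `p` is readable. -/
def rF (p : PVar) : Formula :=
  .or (.dia (.testEn (.atom p)) .top) (.dia (.testEn (.neg (.atom p))) .top)

/-- Restriction `M ∩ P` of a model to a set of variables. -/
def interModel (M : Model) (P : Set PVar) : Model :=
  ⟨M.R ∩ P, M.W ∩ P, M.V ∩ P, Set.inter_subset_inter M.sub (subset_refl P)⟩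

/-- A formula is valid iff true in every model. -/
def Valid (φ : Formula) : Prop := ∀ M : Model, Sat M φ


/-!
Splitting `M` into `M₁, M₂₃` and then `M₂₃` into `M₂, M₃` is the same as splitting it into
`M₁ ∪ M₂` (with valuation `M.V`) and `M₃`, and then `M₁ ∪ M₂` into `M₁, M₂`. Merging regroups in
the same way, because pointwise the merged valuation is an associative operation on pairs
(value, writability). The one new side condition, that `M₁'` and `M₂'` agree outside their
writable variables, holds because every component program leaves the valuation unchanged outside
its writable variables. The converse direction follows from commutativity of `∥`.
-/

section MergeValuation

variable {α : Type*}

def mergeVal (V₁ W₁ V₂ W₂ : Set α) : Set α := (V₁ ∩ W₁) ∪ (V₂ ∩ W₂) ∪ (V₁ ∩ V₂)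

theorem mergeVal_comm (V₁ W₁ V₂ W₂ : Set α) : mergeVal V₁ W₁ V₂ W₂ = mergeVal V₂ W₂ V₁ W₁ := by
  ext x; simp only [mergeVal, Set.mem_union, Set.mem_inter_iff]; tauto

theorem mergeVal_assoc (V₁ W₁ V₂ W₂ V₃ W₃ : Set α) :
    mergeVal (mergeVal V₁ W₁ V₂ W₂) (W₁ ∪ W₂) V₃ W₃ =
      mergeVal V₁ W₁ (mergeVal V₂ W₂ V₃ W₃) (W₂ ∪ W₃) := by
  ext x; simp only [mergeVal, Set.mem_union, Set.mem_inter_iff]; tauto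

theorem mergeVal_diff_of_diff_eq {V₁ W₁ V₂ W₂ B : Set α} (h₁ : V₁ \ W₁ = B \ W₁)
    (h₂ : V₂ \ W₂ = B \ W₂) : mergeVal V₁ W₁ V₂ W₂ \ (W₁ ∪ W₂) = B \ (W₁ ∪ W₂) := by
  ext x
  have h₁ := Set.ext_iff.mp h₁ x
  have h₂ := Set.ext_iff.mp h₂ x
  simp only [mergeVal, Set.mem_sdiff, Set.mem_union, Set.mem_inter_iff] at h₁ h₂ ⊢
  tauto

theorem diff_union_eq_of_diff_eq {V₁ W₁ V₂ W₂ B : Set α} (h₁ : V₁ \ W₁ = B \ W₁)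
    (h₂ : V₂ \ W₂ = B \ W₂) : V₁ \ (W₁ ∪ W₂) = V₂ \ (W₁ ∪ W₂) := by
  rw [← Set.sdiff_sdiff, h₁, Set.sdiff_sdiff, Set.union_comm, ← Set.sdiff_sdiff, ← h₂,
    Set.sdiff_sdiff]

end MergeValuation

@[simps]
def Model.union (A B : Model) (V : Set PVar) : Model :=
  ⟨A.R ∪ B.R, A.W ∪ B.W, V, Set.union_subset_union A.sub B.sub⟩

theorem RWdisjoint.symm {A B : Model} (h : RWdisjoint A B) : RWdisjoint B A := ⟨h.2, h.1⟩

theorem RWdisjoint.assoc {A B C BC : Model} (h : RWdisjoint A BC) (hBC : RWdisjoint B C)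
    (hR : BC.R = B.R ∪ C.R) (hW : BC.W = B.W ∪ C.W) (V : Set PVar) :
    RWdisjoint (A.union B V) C ∧ RWdisjoint A B := by
  simp only [RWdisjoint, Model.union, Set.union_inter_distrib_right, Set.inter_union_distrib_left,
    Set.union_empty_iff] at h hBC ⊢
  rw [hR, Set.inter_union_distrib_left, Set.union_empty_iff] at h
  rw [hW, Set.union_inter_distrib_right, Set.union_empty_iff] at h
  tauto

theorem SplitRel.symm {M A B : Model} (h : SplitRel M A B) : SplitRel M B A := by
  obtain ⟨hd, hR, hW, hA, hB⟩ := h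
  exact ⟨hd.symm, hR.trans (Set.union_comm _ _), hW.trans (Set.union_comm _ _), hB, hA⟩

theorem MergeRel.symm {M A B : Model} (h : MergeRel M A B) : MergeRel M B A := by
  obtain ⟨hd, hR, hW, hAB, hV⟩ := h
  exact ⟨hd.symm, hR.trans (Set.union_comm _ _), hW.trans (Set.union_comm _ _), hAB.symm,
    hV.trans (mergeVal_comm A.V A.W B.V B.W)⟩

theorem SplitRel.assoc {M A B C BC : Model} (h : SplitRel M A BC) (hBC : SplitRel BC B C) :
    SplitRel M (A.union B M.V) C ∧ SplitRel (A.union B M.V) A B := by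
  obtain ⟨hd, hR, hW, hA, hV⟩ := h
  obtain ⟨hd', hR', hW', hB, hC⟩ := hBC
  obtain ⟨hd₁, hd₂⟩ := hd.assoc hd' hR' hW' M.V
  exact ⟨⟨hd₁, by rw [hR, hR', ← Set.union_assoc, Model.union_R],
    by rw [hW, hW', ← Set.union_assoc, Model.union_W], rfl, hV.trans hC⟩,
    ⟨hd₂, rfl, rfl, hA, hV.trans hB⟩⟩

theorem MergeRel.assoc {M A B C BC : Model} (h : MergeRel M A BC) (hBC : MergeRel BC B C)
    (hAB : A.V \ (A.W ∪ B.W) = B.V \ (A.W ∪ B.W)) :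
    MergeRel M (A.union B (mergeVal A.V A.W B.V B.W)) C ∧
      MergeRel (A.union B (mergeVal A.V A.W B.V B.W)) A B := by
  obtain ⟨hd, hR, hW, hA, hV : M.V = mergeVal A.V A.W BC.V BC.W⟩ := h
  obtain ⟨hd', hR', hW', hB, hV' : BC.V = mergeVal B.V B.W C.V C.W⟩ := hBC
  obtain ⟨hd₁, hd₂⟩ := hd.assoc hd' hR' hW' (mergeVal A.V A.W B.V B.W)
  refine ⟨⟨hd₁, by rw [hR, hR', ← Set.union_assoc, Model.union_R],
    by rw [hW, hW', ← Set.union_assoc, Model.union_W], ?_, ?_⟩, ⟨hd₂, rfl, rfl, hAB, rfl⟩⟩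
  · ext x
    have hA := Set.ext_iff.mp hA x
    have hB := Set.ext_iff.mp hB x
    simp only [hV', hW, hW', Model.union_V, mergeVal, Set.mem_sdiff, Set.mem_union,
      Set.mem_inter_iff] at hA hB ⊢
    tauto
  · change M.V = mergeVal (mergeVal A.V A.W B.V B.W) (A.W ∪ B.W) C.V C.W
    rw [hV, hV', hW', mergeVal_assoc]

theorem interp_par_swap {π₁ π₂ : Program} {M M' : Model} (h : Interp (.par π₁ π₂) M M') :
    Interp (.par π₂ π₁) M M' := by
  obtain ⟨M₁, M₂, M₁', M₂', hs, hm, h₁, h₂, hR₁, hW₁, hV₁, hR₂, hW₂, hV₂⟩ := h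
  exact ⟨M₂, M₁, M₂', M₁', hs.symm, hm.symm, h₂, h₁, hR₂, hW₂, hV₂, hR₁, hW₁, hV₁⟩

theorem interp_par_assoc_of_right {π₁ π₂ π₃ : Program} {M M' : Model}
    (h : Interp (.par π₁ (.par π₂ π₃)) M M') : Interp (.par (.par π₁ π₂) π₃) M M' := by
  obtain ⟨M₁, M₂₃, M₁', M₂₃', hs, hm, h₁, h₂₃, hR₁, hW₁, hV₁, -⟩ := h
  obtain ⟨M₂, M₃, M₂', M₃', hs₂₃, hm₂₃, h₂, h₃, hR₂, hW₂, hV₂, frame₃⟩ := h₂₃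
  obtain ⟨hs', hs₁₂⟩ := hs.assoc hs₂₃
  obtain ⟨-, -, -, hM₁, hM₂₃⟩ := hs
  obtain ⟨-, -, -, hM₂₃₂, -⟩ := hs₂₃
  -- `π₃` may write between the results of `π₁` and `π₂`, but each of them is untouched
  -- outside its own writable variables, so they still agree outside `M₁.W ∪ M₂.W`.
  have hM₁' : M₁'.V \ M₁'.W = M.V \ M₁'.W := by rw [← hV₁, ← hW₁, hM₁]
  have hM₂' : M₂'.V \ M₂'.W = M.V \ M₂'.W := by rw [← hV₂, ← hW₂, hM₂₃, hM₂₃₂]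
  obtain ⟨hm', hm₁₂⟩ := hm.assoc hm₂₃ (diff_union_eq_of_diff_eq hM₁' hM₂')
  refine ⟨_, M₃, _, M₃', hs', hm',
    ⟨M₁, M₂, M₁', M₂', hs₁₂, hm₁₂, h₁, h₂, hR₁, hW₁, hV₁, hR₂, hW₂, hV₂⟩, h₃, ?_, ?_, ?_, frame₃⟩
  · simp only [Model.union_R, hR₁, hR₂]
  · simp only [Model.union_W, hW₁, hW₂]
  · simp only [Model.union_V, Model.union_W, hW₁, hW₂, mergeVal_diff_of_diff_eq hM₁' hM₂']

/-- Associativity of parallel composition. -/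
theorem par_assoc (π1 π2 π3 : Program) (M M' : Model) :
    Interp (.par π1 (.par π2 π3)) M M' ↔ Interp (.par (.par π1 π2) π3) M M' :=
  ⟨interp_par_assoc_of_right, fun h => interp_par_swap <| interp_par_assoc_of_right <|
    interp_par_swap <| interp_par_assoc_of_right <| interp_par_swap h⟩
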